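/- Let F be a finite field, let r, m be natural numbers with 1 ≤ r ≤ m, let c₀, …, c_{r−1} be pairwise distinct elements of F, and fix a secret vector s = (s₀, …, s_{m−r−1}) ∈ F^{m−r}. If the low-coefficient vector b ∈ F^r is drawn from the uniform distribution on F^r, then the resulting share vector (f_b(c₀), …, f_b(c_{r−1})), where f_b(x) = Σ_{j<r} b_j x^j + Σ_{j<m−r} s_j x^{r+j}, is uniformly distributed on F^r; in particular, the distribution of any r shares is the same for every secret s, so these shares carry zero information about the encoded file. -/

import Mathlib

/-! With the secret fixed, the share vector is `b ↦ V b + t` for the Vandermonde matrix `V` of the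
distinct points and a constant `t`; `V` is invertible, so this is a bijection of `F^r`, and a
bijection of a finite type preserves the uniform distribution. -/

theorem PMF.map_uniformOfFintype_of_bijective {α : Type*} [Fintype α] [Nonempty α]
    {f : α → α} (hf : Function.Bijective f) :
    (PMF.uniformOfFintype α).map f = PMF.uniformOfFintype α := by
  classical
  ext a
  obtain ⟨b, rfl⟩ := hf.surjective a
  rw [PMF.map_apply, tsum_eq_single b fun b' hb' => if_neg fun h => hb' (hf.injective h.symm)]
  simp

theorem Matrix.vandermonde_mulVec_injective {R : Type*} [Field R] {n : ℕ} {c : Fin n → R}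
    (hc : Function.Injective c) : Function.Injective (Matrix.vandermonde c).mulVec := by
  rw [Matrix.mulVec_injective_iff_isUnit, Matrix.isUnit_iff_isUnit_det, isUnit_iff_ne_zero]
  exact Matrix.det_vandermonde_ne_zero_iff.mpr hc

theorem Matrix.vandermonde_mulVec_apply {R : Type*} [CommRing R] {n : ℕ} (c b : Fin n → R)
    (i : Fin n) :
    (Matrix.vandermonde c).mulVec b i = ∑ j : Fin n, b j * c i ^ (j : ℕ) := by
  simp only [Matrix.mulVec, dotProduct, Matrix.vandermonde_apply, mul_comm]

theorem shares_uniform_of_uniform_low_coeffs_general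
    {F : Type*} [Field F] [Fintype F] (r m : ℕ)
    (c : Fin r → F) (hc : Function.Injective c)
    (s : Fin (m - r) → F) :
    (PMF.uniformOfFintype (Fin r → F)).map
        (fun b : Fin r → F => fun i : Fin r =>
          (∑ j : Fin r, b j * c i ^ (j : ℕ)) +
            ∑ j : Fin (m - r), s j * c i ^ (r + (j : ℕ))) =
      PMF.uniformOfFintype (Fin r → F) := by
  have shares_eq : (fun b : Fin r → F => fun i : Fin r =>
      (∑ j : Fin r, b j * c i ^ (j : ℕ)) + ∑ j : Fin (m - r), s j * c i ^ (r + (j : ℕ))) =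
      fun b => (Matrix.vandermonde c).mulVec b + fun i => ∑ j, s j * c i ^ (r + (j : ℕ)) := by
    funext b i
    rw [Pi.add_apply, Matrix.vandermonde_mulVec_apply]
  rw [shares_eq]
  refine PMF.map_uniformOfFintype_of_bijective (Finite.injective_iff_bijective.mp ?_)
  exact (add_left_injective _).comp (Matrix.vandermonde_mulVec_injective hc)

/-- Over a finite field `F`, with `1 ≤ r ≤ m`, pairwise distinct points
`c₀, …, c_{r−1}` and any fixed secret `s ∈ F^{m−r}`: if the low coefficients `b`
are uniform on `F^r`, then the share vector `(f_b(c₀), …, f_b(c_{r−1}))`, where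
`f_b(x) = Σ_{j<r} b_j x^j + Σ_{j<m−r} s_j x^{r+j}`, is uniform on `F^r`.
In particular the distribution of any `r` shares is the same for every secret,
so these shares carry zero information about the encoded file. -/
theorem shares_uniform_of_uniform_low_coeffs
    {F : Type*} [Field F] [Fintype F] (r m : ℕ) (hr : 1 ≤ r) (hrm : r ≤ m)
    (c : Fin r → F) (hc : Function.Injective c)
    (s : Fin (m - r) → F) :
    (PMF.uniformOfFintype (Fin r → F)).map
        (fun b : Fin r → F => fun i : Fin r =>
          (∑ j : Fin r, b j * c i ^ (j : ℕ)) +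
            ∑ j : Fin (m - r), s j * c i ^ (r + (j : ℕ))) =
      PMF.uniformOfFintype (Fin r → F) :=
  shares_uniform_of_uniform_low_coeffs_general r m c hc s
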